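/- arXiv:2510.11869 — 7 statements merged into one kernel-verified Lean document; each statement's English description precedes it below -/
import Mathlib

section
/- Let a, b, c be positive real numbers satisfying the strict triangle inequalities (a < b + c, b < c + a, c < a + b). Then there exist positive real numbers x, y, z satisfying the strict triangle inequalities such that, with S = (x + y + z)/2 and Δ² = S(S−x)(S−y)(S−z), the following hold: a² = x² − Δ²/(yz), b² = y² − Δ²/(zx), and c² = z² − Δ²/(xy). -/
/-- The auxiliary function: `ext_x d t` is the positive root `x` of `x² - d² = t·x`. -/
noncomputable def ext_x (d t : ℝ) : ℝ := (t + Real.sqrt (t ^ 2 + 4 * d ^ 2)) / 2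

lemma ext_sqrt_sq (d t : ℝ) : Real.sqrt (t ^ 2 + 4 * d ^ 2) ^ 2 = t ^ 2 + 4 * d ^ 2 :=
  Real.sq_sqrt (by positivity)

lemma ext_x_pos (d t : ℝ) (hd : 0 < d) (ht : 0 ≤ t) : 0 < ext_x d t := by
  unfold ext_x
  nlinarith [ext_sqrt_sq d t, Real.sqrt_nonneg (t ^ 2 + 4 * d ^ 2), sq_nonneg t,
    mul_pos hd hd]

lemma ext_x_ge (d t : ℝ) (ht : 0 ≤ t) : t ≤ ext_x d t := by
  unfold ext_x
  nlinarith [ext_sqrt_sq d t, Real.sqrt_nonneg (t ^ 2 + 4 * d ^ 2), sq_nonneg d]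

lemma ext_x_le (d t : ℝ) (hd : 0 ≤ d) (ht : 0 ≤ t) : ext_x d t ≤ t + d := by
  unfold ext_x
  nlinarith [ext_sqrt_sq d t, Real.sqrt_nonneg (t ^ 2 + 4 * d ^ 2), mul_nonneg ht hd]

lemma ext_x_sq (d t : ℝ) : ext_x d t ^ 2 - d ^ 2 = t * ext_x d t := by
  unfold ext_x; linear_combination (ext_sqrt_sq d t) / 4

lemma two_mul_le_sqrt (d t : ℝ) (hd : 0 ≤ d) : 2 * d ≤ Real.sqrt (t ^ 2 + 4 * d ^ 2) := by
  nlinarith [ext_sqrt_sq d t, Real.sqrt_nonneg (t ^ 2 + 4 * d ^ 2), sq_nonneg t]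

lemma ext_x_lt (a b c t : ℝ) (ha : 0 < a) (hb : 0 < b) (hc : 0 < c) (h : a < b + c)
    (ht : 0 ≤ t) : ext_x a t < ext_x b t + ext_x c t := by
  have hb' := two_mul_le_sqrt b t hb.le
  have hc' := two_mul_le_sqrt c t hc.le
  have hbc : (0:ℝ) < Real.sqrt (t ^ 2 + 4 * b ^ 2) + Real.sqrt (t ^ 2 + 4 * c ^ 2) := by
    linarith
  have key : Real.sqrt (t ^ 2 + 4 * a ^ 2)
      < Real.sqrt (t ^ 2 + 4 * b ^ 2) + Real.sqrt (t ^ 2 + 4 * c ^ 2) := by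
    refine (Real.sqrt_lt' hbc).mpr ?_
    nlinarith [ext_sqrt_sq b t, ext_sqrt_sq c t,
      mul_le_mul hb' hc' (by linarith : (0:ℝ) ≤ 2 * c) (Real.sqrt_nonneg _),
      sq_nonneg t, mul_pos (sub_pos.mpr h) (show (0:ℝ) < b + c + a by linarith)]
  unfold ext_x; linarith

lemma ext_x_zero (d : ℝ) (hd : 0 ≤ d) : ext_x d 0 = d := by
  unfold ext_x
  rw [show (0:ℝ) ^ 2 + 4 * d ^ 2 = (2 * d) ^ 2 by ring, Real.sqrt_sq (by linarith)]
  ring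

lemma ext_x_continuous (d : ℝ) : Continuous (ext_x d) := by
  unfold ext_x
  exact (continuous_id.add (Real.continuous_sqrt.comp (by continuity))).div_const 2

set_option maxHeartbeats 1000000 in
/-- Given side lengths `a, b, c` of a triangle, there exist side lengths `x, y, z` of a
triangle whose extouch triangle has side lengths `a, b, c`. -/
theorem exists_extouch_side_lengths
    (a b c : ℝ) (ha : 0 < a) (hb : 0 < b) (hc : 0 < c)
    (hab : a < b + c) (hbc : b < c + a) (hca : c < a + b) :
    ∃ x y z : ℝ, 0 < x ∧ 0 < y ∧ 0 < z ∧
      x < y + z ∧ y < z + x ∧ z < x + y ∧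
      (let S := (x + y + z) / 2
       let Δsq := S * (S - x) * (S - y) * (S - z)
       a ^ 2 = x ^ 2 - Δsq / (y * z) ∧
       b ^ 2 = y ^ 2 - Δsq / (z * x) ∧
       c ^ 2 = z ^ 2 - Δsq / (x * y)) := by
  have hp : (0:ℝ) < a + b + c := by linarith
  have hp4 : (0:ℝ) < (a+b+c)*((a+b+c)*((a+b+c)*(a+b+c))) := by positivity
  set T : ℝ := 3 * (a + b + c) with hT
  have hT0 : (0:ℝ) < T := by rw [hT]; linarith
  -- the one-variable function whose zero we seek
  have hca' := ext_x_continuous a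
  have hcb' := ext_x_continuous b
  have hcc' := ext_x_continuous c
  have hcS : Continuous fun t => (ext_x a t + ext_x b t + ext_x c t) / 2 :=
    ((hca'.add hcb').add hcc').div_const 2
  have hcf : Continuous fun t : ℝ =>
      (ext_x a t + ext_x b t + ext_x c t) / 2
        * ((ext_x a t + ext_x b t + ext_x c t) / 2 - ext_x a t)
        * ((ext_x a t + ext_x b t + ext_x c t) / 2 - ext_x b t)
        * ((ext_x a t + ext_x b t + ext_x c t) / 2 - ext_x c t)
        - t * (ext_x a t * ext_x b t * ext_x c t) :=
    (((hcS.mul (hcS.sub hca')).mul (hcS.sub hcb')).mul (hcS.sub hcc')).sub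
      (continuous_id.mul ((hca'.mul hcb').mul hcc'))
  -- value at 0 is positive
  have hf0 : (0:ℝ) <
      (ext_x a 0 + ext_x b 0 + ext_x c 0) / 2
        * ((ext_x a 0 + ext_x b 0 + ext_x c 0) / 2 - ext_x a 0)
        * ((ext_x a 0 + ext_x b 0 + ext_x c 0) / 2 - ext_x b 0)
        * ((ext_x a 0 + ext_x b 0 + ext_x c 0) / 2 - ext_x c 0)
        - 0 * (ext_x a 0 * ext_x b 0 * ext_x c 0) := by
    rw [ext_x_zero a ha.le, ext_x_zero b hb.le, ext_x_zero c hc.le]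
    have f1 : (0:ℝ) < (a + b + c) / 2 := by linarith
    have f2 : (0:ℝ) < (a + b + c) / 2 - a := by linarith
    have f3 : (0:ℝ) < (a + b + c) / 2 - b := by linarith
    have f4 : (0:ℝ) < (a + b + c) / 2 - c := by linarith
    nlinarith [mul_pos (mul_pos (mul_pos f1 f2) f3) f4]
  -- value at T is negative
  have hfT :
      (ext_x a T + ext_x b T + ext_x c T) / 2
        * ((ext_x a T + ext_x b T + ext_x c T) / 2 - ext_x a T)
        * ((ext_x a T + ext_x b T + ext_x c T) / 2 - ext_x b T)
        * ((ext_x a T + ext_x b T + ext_x c T) / 2 - ext_x c T)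
        - T * (ext_x a T * ext_x b T * ext_x c T) < 0 := by
    have hxp := ext_x_pos a T ha hT0.le
    have hyp := ext_x_pos b T hb hT0.le
    have hzp := ext_x_pos c T hc hT0.le
    have hxle := ext_x_le a T ha.le hT0.le
    have hyle := ext_x_le b T hb.le hT0.le
    have hzle := ext_x_le c T hc.le hT0.le
    have hxge := ext_x_ge a T hT0.le
    have hyge := ext_x_ge b T hT0.le
    have hzge := ext_x_ge c T hT0.le
    have ht1 := ext_x_lt a b c T ha hb hc hab hT0.le
    have ht2 := ext_x_lt b c a T hb hc ha hbc hT0.le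
    have ht3 := ext_x_lt c a b T hc ha hb hca hT0.le
    set X := ext_x a T
    set Y := ext_x b T
    set Z := ext_x c T
    rw [hT] at hxle hyle hzle hxge hyge hzge
    have hS1 : (X + Y + Z) / 2 ≤ 5 * (a + b + c) := by linarith
    have hSx : (X + Y + Z) / 2 - X ≤ 2 * (a + b + c) := by linarith
    have hSy : (X + Y + Z) / 2 - Y ≤ 2 * (a + b + c) := by linarith
    have hSz : (X + Y + Z) / 2 - Z ≤ 2 * (a + b + c) := by linarith
    have hSx0 : (0:ℝ) ≤ (X + Y + Z) / 2 - X := by linarith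
    have hSy0 : (0:ℝ) ≤ (X + Y + Z) / 2 - Y := by linarith
    have hSz0 : (0:ℝ) ≤ (X + Y + Z) / 2 - Z := by linarith
    have h12 : (X + Y + Z) / 2 * ((X + Y + Z) / 2 - X)
        ≤ 5 * (a + b + c) * (2 * (a + b + c)) :=
      mul_le_mul hS1 hSx hSx0 (by linarith)
    have h123 : (X + Y + Z) / 2 * ((X + Y + Z) / 2 - X) * ((X + Y + Z) / 2 - Y)
        ≤ 5 * (a + b + c) * (2 * (a + b + c)) * (2 * (a + b + c)) :=
      mul_le_mul h12 hSy hSy0 (by nlinarith [mul_pos hp hp])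
    have h1234 : (X + Y + Z) / 2 * ((X + Y + Z) / 2 - X) * ((X + Y + Z) / 2 - Y)
          * ((X + Y + Z) / 2 - Z)
        ≤ 5 * (a + b + c) * (2 * (a + b + c)) * (2 * (a + b + c)) * (2 * (a + b + c)) :=
      mul_le_mul h123 hSz hSz0 (by nlinarith [mul_pos (mul_pos hp hp) hp])
    have hm1 : T * T ≤ X * Y := mul_le_mul hxge hyge hT0.le hxp.le
    have hm2 : T * T * T ≤ X * Y * Z :=
      mul_le_mul hm1 hzge hT0.le (mul_nonneg hxp.le hyp.le)
    have hm3 : T * (T * T * T) ≤ T * (X * Y * Z) :=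
      mul_le_mul_of_nonneg_left hm2 hT0.le
    have hTT : T * (T * T * T) = 81 * ((a+b+c)*((a+b+c)*((a+b+c)*(a+b+c)))) := by
      rw [hT]; ring
    rw [hTT] at hm3
    linarith [h1234, hm3, hp4]
  -- intermediate value theorem
  have key := intermediate_value_Icc' hT0.le hcf.continuousOn
  have h0mem : (0:ℝ) ∈ Set.Icc
      ((fun t : ℝ =>
        (ext_x a t + ext_x b t + ext_x c t) / 2
          * ((ext_x a t + ext_x b t + ext_x c t) / 2 - ext_x a t)
          * ((ext_x a t + ext_x b t + ext_x c t) / 2 - ext_x b t)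
          * ((ext_x a t + ext_x b t + ext_x c t) / 2 - ext_x c t)
          - t * (ext_x a t * ext_x b t * ext_x c t)) T)
      ((fun t : ℝ =>
        (ext_x a t + ext_x b t + ext_x c t) / 2
          * ((ext_x a t + ext_x b t + ext_x c t) / 2 - ext_x a t)
          * ((ext_x a t + ext_x b t + ext_x c t) / 2 - ext_x b t)
          * ((ext_x a t + ext_x b t + ext_x c t) / 2 - ext_x c t)
          - t * (ext_x a t * ext_x b t * ext_x c t)) 0) :=
    ⟨hfT.le, hf0.le⟩
  obtain ⟨t, htmem, hft⟩ := key h0mem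
  have hft' : (ext_x a t + ext_x b t + ext_x c t) / 2
        * ((ext_x a t + ext_x b t + ext_x c t) / 2 - ext_x a t)
        * ((ext_x a t + ext_x b t + ext_x c t) / 2 - ext_x b t)
        * ((ext_x a t + ext_x b t + ext_x c t) / 2 - ext_x c t)
        - t * (ext_x a t * ext_x b t * ext_x c t) = 0 := hft
  have ht0 : 0 < t := by
    rcases lt_or_eq_of_le htmem.1 with h | h
    · exact h
    · exfalso
      rw [← h] at hft'
      linarith [hf0, hft']
  set x := ext_x a t with hxdef
  set y := ext_x b t with hydef
  set z := ext_x c t with hzdef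
  have hx : 0 < x := ext_x_pos a t ha ht0.le
  have hy : 0 < y := ext_x_pos b t hb ht0.le
  have hz : 0 < z := ext_x_pos c t hc ht0.le
  have htri1 : x < y + z := ext_x_lt a b c t ha hb hc hab ht0.le
  have htri2 : y < z + x := ext_x_lt b c a t hb hc ha hbc ht0.le
  have htri3 : z < x + y := ext_x_lt c a b t hc ha hb hca ht0.le
  have hΔ : (x + y + z) / 2 * ((x + y + z) / 2 - x) * ((x + y + z) / 2 - y)
      * ((x + y + z) / 2 - z) = t * (x * y * z) := by linarith [hft']
  have hxq : x ^ 2 - a ^ 2 = t * x := ext_x_sq a t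
  have hyq : y ^ 2 - b ^ 2 = t * y := ext_x_sq b t
  have hzq : z ^ 2 - c ^ 2 = t * z := ext_x_sq c t
  have hy0 : y ≠ 0 := ne_of_gt hy
  have hz0 : z ≠ 0 := ne_of_gt hz
  have hx0 : x ≠ 0 := ne_of_gt hx
  refine ⟨x, y, z, hx, hy, hz, htri1, htri2, htri3, ?_, ?_, ?_⟩
  · show a ^ 2 = x ^ 2 - ((x + y + z) / 2 * ((x + y + z) / 2 - x) * ((x + y + z) / 2 - y)
      * ((x + y + z) / 2 - z)) / (y * z)
    rw [hΔ]
    have e1 : t * (x * y * z) / (y * z) = t * x := by field_simp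
    rw [e1]; linarith [hxq]
  · show b ^ 2 = y ^ 2 - ((x + y + z) / 2 * ((x + y + z) / 2 - x) * ((x + y + z) / 2 - y)
      * ((x + y + z) / 2 - z)) / (z * x)
    rw [hΔ]
    have e2 : t * (x * y * z) / (z * x) = t * y := by field_simp
    rw [e2]; linarith [hyq]
  · show c ^ 2 = z ^ 2 - ((x + y + z) / 2 * ((x + y + z) / 2 - x) * ((x + y + z) / 2 - y)
      * ((x + y + z) / 2 - z)) / (x * y)
    rw [hΔ]
    have e3 : t * (x * y * z) / (x * y) = t * z := by field_simp
    rw [e3]; linarith [hzq]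
end

section
/- Let a, b, c be positive real numbers satisfying the strict triangle inequalities. For x > 0 define y(x) = (x² − a² + √(x⁴ + 2(2b² − a²)x² + a⁴))/(2x), z(x) = (x² − a² + √(x⁴ + 2(2c² − a²)x² + a⁴))/(2x), S(x) = (x + y(x) + z(x))/2, and f(x) = y(x)·z(x)·(x² − a²) − S(x)(S(x) − x)(S(x) − y(x))(S(x) − z(x)). Then there exists x₀ > a such that f(x₀) = 0. -/
/-!
`y(x)` is the positive root of `x y² - (x² - a²) y - b² x = 0`, so `y(a) = b` and `z(a) = c`;
there `f(a)` is minus the squared area of the triangle `a, b, c`, hence negative. For large `x`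
both `y(x)` and `z(x)` lie within `x/8` of `x`, so the Heron term `S(S-x)(S-y)(S-z)` is
about `3x⁴/16` while `y z (x² - a²)` is about `x⁴`, and `f(x) > 0`. Continuity and the
intermediate value theorem give the root.
-/

open Real Set

noncomputable def extouchSide (a b x : ℝ) : ℝ :=
  (x ^ 2 - a ^ 2 + √(x ^ 4 + 2 * (2 * b ^ 2 - a ^ 2) * x ^ 2 + a ^ 4)) / (2 * x)

lemma extouchSide_radicand (a b x : ℝ) :
    x ^ 4 + 2 * (2 * b ^ 2 - a ^ 2) * x ^ 2 + a ^ 4 = (x ^ 2 - a ^ 2) ^ 2 + (2 * b * x) ^ 2 := by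
  ring

lemma extouchSide_self {a b : ℝ} (ha : 0 < a) (hb : 0 ≤ b) : extouchSide a b a = b := by
  rw [extouchSide, extouchSide_radicand, sub_self, zero_pow two_ne_zero, zero_add, zero_add,
    sqrt_sq (by positivity)]
  field_simp

lemma continuousOn_extouchSide (a b : ℝ) : ContinuousOn (extouchSide a b) (Ioi 0) :=
  ContinuousOn.div (by fun_prop) (by fun_prop) fun _ hx => by simp only [mem_Ioi] at hx; positivity

lemma sub_div_le_extouchSide (a b : ℝ) {x : ℝ} (hx : 0 < x) :
    (x ^ 2 - a ^ 2) / x ≤ extouchSide a b x := by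
  have hsqrt : x ^ 2 - a ^ 2 ≤ √((x ^ 2 - a ^ 2) ^ 2 + (2 * b * x) ^ 2) :=
    (le_abs_self _).trans (abs_le_sqrt (by nlinarith))
  rw [extouchSide, extouchSide_radicand, div_le_div_iff₀ hx (by positivity)]
  nlinarith

lemma extouchSide_le {a b x : ℝ} (hb : 0 ≤ b) (hx : 0 < x) (hax : a ^ 2 ≤ x ^ 2) :
    extouchSide a b x ≤ (x ^ 2 - a ^ 2) / x + b := by
  have hsqrt : √((x ^ 2 - a ^ 2) ^ 2 + (2 * b * x) ^ 2) ≤ x ^ 2 - a ^ 2 + 2 * b * x :=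
    sqrt_le_iff.mpr ⟨by positivity,
      by nlinarith [mul_nonneg (mul_nonneg hb hx.le) (sub_nonneg.mpr hax)]⟩
  rw [extouchSide, extouchSide_radicand, div_add' _ _ _ hx.ne',
    div_le_div_iff₀ (by positivity) hx]
  nlinarith

lemma extouchSide_mem_Icc {a b x : ℝ} (hb : 0 ≤ b) (hx : 0 < x) (ha : 8 * a ^ 2 ≤ x ^ 2)
    (hbx : 8 * b ≤ x) : extouchSide a b x ∈ Icc (x - x / 8) (x + x / 8) := by
  have ha' : a ^ 2 / x ≤ x / 8 := by rw [div_le_div_iff₀ hx (by norm_num)]; nlinarith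
  have hsplit : (x ^ 2 - a ^ 2) / x = x - a ^ 2 / x := by field_simp
  constructor
  · linarith [sub_div_le_extouchSide a b hx]
  · linarith [extouchSide_le (a := a) hb hx (by nlinarith), div_nonneg (sq_nonneg a) hx.le]

lemma heron_lt_of_mem_Icc {a p q x : ℝ} (hx : 0 < x) (ha : 8 * a ^ 2 ≤ x ^ 2)
    (hp : p ∈ Icc (x - x / 8) (x + x / 8)) (hq : q ∈ Icc (x - x / 8) (x + x / 8)) :
    (x + p + q) * (p + q - x) * (x + q - p) * (x + p - q) < 16 * p * q * (x ^ 2 - a ^ 2) := by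
  obtain ⟨hp₁, hp₂⟩ := hp
  obtain ⟨hq₁, hq₂⟩ := hq
  calc (x + p + q) * (p + q - x) * (x + q - p) * (x + p - q)
      ≤ (13 * x / 4) * (5 * x / 4) * (5 * x / 4) * (5 * x / 4) := by
        gcongr <;> linarith
    _ < 16 * (7 * x / 8) * (7 * x / 8) * (7 * x ^ 2 / 8) := by nlinarith [pow_pos hx 4]
    _ ≤ 16 * p * q * (x ^ 2 - a ^ 2) := by gcongr <;> nlinarith

/-- The auxiliary function `f` from the proof of the extouch theorem has a root `x₀ > a`. -/
theorem exists_root_of_extouch_function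
    (a b c : ℝ) (ha : 0 < a) (hb : 0 < b) (hc : 0 < c)
    (hab : a < b + c) (hbc : b < c + a) (hca : c < a + b) :
    let y : ℝ → ℝ := fun x =>
      (x ^ 2 - a ^ 2 + Real.sqrt (x ^ 4 + 2 * (2 * b ^ 2 - a ^ 2) * x ^ 2 + a ^ 4)) / (2 * x)
    let z : ℝ → ℝ := fun x =>
      (x ^ 2 - a ^ 2 + Real.sqrt (x ^ 4 + 2 * (2 * c ^ 2 - a ^ 2) * x ^ 2 + a ^ 4)) / (2 * x)
    let S : ℝ → ℝ := fun x => (x + y x + z x) / 2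
    let f : ℝ → ℝ := fun x =>
      y x * z x * (x ^ 2 - a ^ 2) - S x * (S x - x) * (S x - y x) * (S x - z x)
    ∃ x₀ : ℝ, a < x₀ ∧ f x₀ = 0 := by
  intro y z S f
  have hf (x : ℝ) : f x = (16 * y x * z x * (x ^ 2 - a ^ 2) -
      (x + y x + z x) * (y x + z x - x) * (x + z x - y x) * (x + y x - z x)) / 16 := by
    simp only [f, S]; ring
  have hy : y = extouchSide a b := rfl
  have hz : z = extouchSide a c := rfl
  set M := 8 * (a + b + c)
  have haM : a ≤ M := by linarith
  have hM : 8 * a ^ 2 ≤ M ^ 2 := by nlinarith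
  have hfa : f a < 0 := by
    rw [hf, hy, hz, extouchSide_self ha hb.le, extouchSide_self ha hc.le]
    have hheron : 0 < (a + b + c) * (b + c - a) * (a + c - b) * (a + b - c) := by
      apply_rules [mul_pos] <;> linarith
    linarith
  have hfM : 0 < f M := by
    rw [hf, hy, hz]
    have hlt := heron_lt_of_mem_Icc (by positivity) hM
      (extouchSide_mem_Icc hb.le (by positivity) hM (by linarith))
      (extouchSide_mem_Icc hc.le (by positivity) hM (by linarith))
    linarith
  have hIcc : Icc a M ⊆ Ioi 0 := Icc_subset_Ioi_iff haM |>.mpr ha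
  have hyc : ContinuousOn y (Icc a M) := (continuousOn_extouchSide a b).mono hIcc
  have hzc : ContinuousOn z (Icc a M) := (continuousOn_extouchSide a c).mono hIcc
  have hfc : ContinuousOn f (Icc a M) := by simp only [f, S]; fun_prop
  obtain ⟨x₀, hx₀, hfx₀⟩ := intermediate_value_Ioo haM hfc ⟨hfa, hfM⟩
  exact ⟨x₀, hx₀.1, hfx₀⟩
end

section
/- Let F₁, F₂ be points in the Euclidean plane and set f = dist F₁ F₂ / 2. Let a₁, a₂ be positive real numbers with 2f ≤ a₁ and 2f ≤ a₂ (so that both ellipses below have eccentricity at most 1/2), and let E₁ = {P : dist P F₁ + dist P F₂ = 2a₁} and E₂ = {P : dist P F₁ + dist P F₂ = 2a₂}. Then the Hausdorff distance between E₁ and E₂ satisfies d_H(E₁, E₂) ≤ 2·|a₂ − a₁|. -/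
/-! Slide `P` along the ray from `F₁` through `P`. On that ray the focal sum is
`t + ‖t • u - (F₂ - F₁)‖`, and once it is at least `2 * dist F₁ F₂` the ray has passed the foot
of the perpendicular from `F₂`, so the distance to `F₂` no longer decreases and the focal sum grows
at least at unit speed. Eccentricity at most `1/2` puts both ellipses in that region, and the
intermediate value theorem finds a point of the other ellipse on the ray within `|2a₂ - 2a₁|`
of `P`. -/

open Metric Set

lemma exists_eq_abs_sub_le_of_expanding {G : ℝ → ℝ} (hG : Continuous G) {m : ℝ}
    (hexp : ∀ s t, 0 ≤ s → s ≤ t → m ≤ G s → t - s ≤ G t - G s)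
    {t₀ y : ℝ} (ht₀ : 0 ≤ t₀) (hm₀ : m ≤ G t₀) (hmy : m ≤ y) (h0 : G 0 ≤ y) :
    ∃ t, 0 ≤ t ∧ G t = y ∧ |t - t₀| ≤ |y - G t₀| := by
  rcases le_total (G t₀) y with hle | hle
  · have hT : t₀ ≤ t₀ + (y - G t₀) := by linarith
    obtain ⟨t, ⟨ht₀t, htT⟩, hty⟩ : y ∈ G '' Icc t₀ (t₀ + (y - G t₀)) :=
      intermediate_value_Icc hT hG.continuousOn
        ⟨hle, by linarith [hexp _ _ ht₀ hT hm₀]⟩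
    refine ⟨t, ht₀.trans ht₀t, hty, ?_⟩
    rw [abs_of_nonneg (sub_nonneg.2 ht₀t), abs_of_nonneg (sub_nonneg.2 hle)]
    linarith
  · obtain ⟨t, ⟨ht0, htt₀⟩, hty⟩ : y ∈ G '' Icc 0 t₀ :=
      intermediate_value_Icc ht₀ hG.continuousOn ⟨h0, hle⟩
    refine ⟨t, ht0, hty, ?_⟩
    rw [abs_sub_comm, abs_sub_comm y, abs_of_nonneg (sub_nonneg.2 htt₀),
      abs_of_nonneg (sub_nonneg.2 hle)]
    linarith [hexp _ _ ht0 htt₀ (hty ▸ hmy)]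

section InnerProductSpace

variable {E : Type*} [NormedAddCommGroup E] [InnerProductSpace ℝ E] {u v : E}

lemma norm_smul_sub_sq (hu : ‖u‖ = 1) (t : ℝ) :
    ‖t • u - v‖ ^ 2 = t ^ 2 - 2 * t * inner ℝ u v + ‖v‖ ^ 2 := by
  rw [norm_sub_sq_real, norm_smul, real_inner_smul_left, hu, Real.norm_eq_abs, mul_one, sq_abs]
  ring

lemma norm_smul_sub_le_norm_smul_sub (hu : ‖u‖ = 1) {s t : ℝ} (hs : inner ℝ u v ≤ s)
    (hst : s ≤ t) : ‖s • u - v‖ ≤ ‖t • u - v‖ := by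
  refine (pow_le_pow_iff_left₀ (norm_nonneg _) (norm_nonneg _) two_ne_zero).1 ?_
  rw [norm_smul_sub_sq hu, norm_smul_sub_sq hu]
  nlinarith

lemma inner_le_of_two_mul_norm_le (hu : ‖u‖ = 1) {s : ℝ} (hs : 0 ≤ s)
    (h : 2 * ‖v‖ ≤ s + ‖s • u - v‖) : inner ℝ u v ≤ s := by
  by_contra! hlt
  have hv : inner ℝ u v ≤ ‖v‖ := by simpa [hu] using real_inner_le_norm u v
  have : ‖s • u - v‖ ≤ ‖(0 : ℝ) • u - v‖ := by
    refine (pow_le_pow_iff_left₀ (norm_nonneg _) (norm_nonneg _) two_ne_zero).1 ?_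
    rw [norm_smul_sub_sq hu, norm_smul_sub_sq hu]
    nlinarith
  rw [zero_smul, zero_sub, norm_neg] at this
  linarith

lemma sub_le_add_norm_smul_sub_sub (hu : ‖u‖ = 1) {s t : ℝ} (hs : 0 ≤ s) (hst : s ≤ t)
    (h : 2 * ‖v‖ ≤ s + ‖s • u - v‖) :
    t - s ≤ (t + ‖t • u - v‖) - (s + ‖s • u - v‖) := by
  linarith [norm_smul_sub_le_norm_smul_sub hu (inner_le_of_two_mul_norm_le hu hs h) hst]


lemma exists_dist_add_dist_eq_and_dist_le {F₁ F₂ P : E} (hP : P ≠ F₁)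
    (hPsum : 2 * dist F₁ F₂ ≤ dist P F₁ + dist P F₂) {r : ℝ} (hr : 2 * dist F₁ F₂ ≤ r) :
    ∃ Q, dist Q F₁ + dist Q F₂ = r ∧ dist P Q ≤ |r - (dist P F₁ + dist P F₂)| := by
  set t₀ := dist P F₁
  have ht₀ : 0 < t₀ := dist_pos.2 hP
  set u : E := t₀⁻¹ • (P - F₁)
  have hu : ‖u‖ = 1 := by
    rw [norm_smul, ← dist_eq_norm, norm_inv, Real.norm_of_nonneg ht₀.le, inv_mul_cancel₀ ht₀.ne']
  have hPu : P = F₁ + t₀ • u := by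
    rw [smul_smul, mul_inv_cancel₀ ht₀.ne', one_smul, add_sub_cancel]
  have hsum : ∀ t, 0 ≤ t →
      dist (F₁ + t • u) F₁ + dist (F₁ + t • u) F₂ = t + ‖t • u - (F₂ - F₁)‖ := by
    intro t ht
    rw [dist_self_add_left, norm_smul, hu, Real.norm_of_nonneg ht, mul_one, dist_eq_norm,
      sub_sub_eq_add_sub, add_comm (t • u)]
  have hv : ‖F₂ - F₁‖ = dist F₁ F₂ := by rw [dist_comm, dist_eq_norm]
  obtain ⟨t, ht, hty, hdist⟩ := exists_eq_abs_sub_le_of_expanding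
    (G := fun t => t + ‖t • u - (F₂ - F₁)‖) (by fun_prop)
    (fun s t hs hst h => sub_le_add_norm_smul_sub_sub hu hs hst (hv ▸ h)) ht₀.le
    (by rw [← hsum t₀ ht₀.le, ← hPu]; exact hPsum) hr
    (by
      simp only [zero_smul, zero_sub, norm_neg, zero_add, hv]
      linarith [dist_nonneg (x := F₁) (y := F₂)])
  refine ⟨F₁ + t • u, (hsum t ht).trans hty, ?_⟩
  rw [← hsum t₀ ht₀.le, ← hPu] at hdist
  calc dist P (F₁ + t • u) = |t - t₀| := by
        rw [hPu, dist_add_left, dist_eq_norm, ← sub_smul, norm_smul, hu, mul_one,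
          Real.norm_eq_abs, abs_sub_comm]
    _ ≤ _ := hdist

end InnerProductSpace

/-- Confocal ellipses of eccentricity at most `1/2` are at Hausdorff distance at most
twice the difference of their semi-major axes. -/
theorem hausdorffDist_confocal_ellipses_le
    (F₁ F₂ : EuclideanSpace ℝ (Fin 2)) (f a₁ a₂ : ℝ)
    (hf : f = dist F₁ F₂ / 2)
    (ha₁ : 0 < a₁) (ha₂ : 0 < a₂)
    (he₁ : 2 * f ≤ a₁) (he₂ : 2 * f ≤ a₂) :
    Metric.hausdorffDist
        {P : EuclideanSpace ℝ (Fin 2) | dist P F₁ + dist P F₂ = 2 * a₁}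
        {P : EuclideanSpace ℝ (Fin 2) | dist P F₁ + dist P F₂ = 2 * a₂}
      ≤ 2 * |a₂ - a₁| := by
  have hc : dist F₁ F₂ = 2 * f := by rw [hf]; ring
  have near : ∀ a b : ℝ, 0 < a → 2 * f ≤ a → 2 * f ≤ b →
      ∀ P ∈ {P : EuclideanSpace ℝ (Fin 2) | dist P F₁ + dist P F₂ = 2 * a},
      ∃ Q ∈ {P : EuclideanSpace ℝ (Fin 2) | dist P F₁ + dist P F₂ = 2 * b},
        dist P Q ≤ 2 * |b - a| := by
    intro a b ha hfa hfb P (hP : _ = _)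
    have hPF₁ : P ≠ F₁ := by
      rintro rfl
      rw [dist_self, zero_add, hc] at hP
      linarith
    obtain ⟨Q, hQ, hPQ⟩ := exists_dist_add_dist_eq_and_dist_le hPF₁ (by linarith)
      (r := 2 * b) (by linarith)
    refine ⟨Q, hQ, hPQ.trans_eq ?_⟩
    rw [hP, ← mul_sub, abs_mul, abs_two]
  apply hausdorffDist_le_of_mem_dist (by positivity)
  · exact near a₁ a₂ ha₁ he₁ he₂
  · rw [abs_sub_comm]
    exact near a₂ a₁ ha₂ he₂ he₁
end

section
/- Let d > 0 and let F₁, F₂ be points in the Euclidean plane with dist F₁ F₂ ≤ 2d, whose midpoint C satisfies ‖C‖ ≤ 2d (distance to the origin at most 2d). Let a ≥ dist F₁ F₂ / 2 with a > 0, and let E = {P : dist P F₁ + dist P F₂ = 2a}. Then for all points P, Q ∈ E, one has ‖P‖ − ‖Q‖ ≤ 5d; that is, the maximum and minimum distances from the origin to points of E differ by at most 5d. -/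
/-- An ellipse with focal distance at most `2d` and center at distance at most `2d` from
the origin has all its points within a radial band of width `5d` about the origin. -/
theorem ellipse_radial_deviation_le
    (d : ℝ) (hd : 0 < d) (F₁ F₂ : EuclideanSpace ℝ (Fin 2))
    (hF : dist F₁ F₂ ≤ 2 * d)
    (hC : ‖midpoint ℝ F₁ F₂‖ ≤ 2 * d)
    (a : ℝ) (ha : 0 < a) (haf : dist F₁ F₂ / 2 ≤ a) :
    ∀ P Q : EuclideanSpace ℝ (Fin 2),
      dist P F₁ + dist P F₂ = 2 * a →
      dist Q F₁ + dist Q F₂ = 2 * a →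
      ‖P‖ - ‖Q‖ ≤ 5 * d := by
  intro P Q hP hQ
  set C := midpoint ℝ F₁ F₂ with hCdef
  set c := dist F₁ F₂ / 2 with hcdef
  have hc0 : 0 ≤ c := by positivity
  -- upper bound for dist P C
  have hPC : dist P C ≤ a := by
    have h := dist_midpoint_midpoint_le P P F₁ F₂
    rw [midpoint_self] at h
    linarith
  -- lower bound for dist Q C via Apollonius
  have hApo := EuclideanGeometry.dist_sq_add_dist_sq_eq_two_mul_dist_midpoint_sq_add_half_dist_sq
    Q F₁ F₂
  have hsq : a ^ 2 - c ^ 2 ≤ dist Q C ^ 2 := by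
    have h1 : dist Q F₁ ^ 2 + dist Q F₂ ^ 2 = 2 * (dist Q C ^ 2 + c ^ 2) := hApo
    nlinarith [sq_nonneg (dist Q F₁ - dist Q F₂)]
  have hQC : a - c ≤ dist Q C := by
    nlinarith [dist_nonneg (x := Q) (y := C), sq_nonneg (dist Q C - (a - c))]
  have h1 : ‖P‖ ≤ dist P C + ‖C‖ := by
    calc ‖P‖ = dist P 0 := (dist_zero_right P).symm
    _ ≤ dist P C + dist C 0 := dist_triangle _ _ _
    _ = dist P C + ‖C‖ := by rw [dist_zero_right]
  have h2 : dist Q C - ‖C‖ ≤ ‖Q‖ := by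
    have : dist Q C ≤ dist Q 0 + dist 0 C := dist_triangle _ _ _
    rw [dist_zero_right, dist_comm 0 C, dist_zero_right] at this
    linarith
  have hcd : c ≤ d := by linarith
  linarith
end

section
/- Let F₁, F₂, x, y, O, p, q be points in the Euclidean plane such that: dist O p = dist O q = dist O F₂ (p, q, F₂ lie on a common circle centered at O); x lies between F₁ and p (Wbtw ℝ F₁ x p); y lies between F₁ and q (Wbtw ℝ F₁ y q); F₂ lies between x and y (Wbtw ℝ x F₂ y); the circle is tangent to the line xy at F₂, i.e. ⟪O − F₂, x − y⟫ = 0; the circle is tangent to the line F₁p at p, i.e. ⟪O − p, F₁ − p⟫ = 0; and the circle is tangent to the line F₁q at q, i.e. ⟪O − q, F₁ − q⟫ = 0. Then dist F₁ x + dist x F₂ = dist F₁ y + dist y F₂; in particular, x and y lie on a common ellipse with foci F₁ and F₂. -/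
open RealInnerProductSpace

/-- Tangent-length Pythagoras: if `O - p ⟂ a - p` then `dist a p ^ 2 = dist a O ^ 2 - dist O p ^ 2`. -/
lemma tang_sq (a O p : EuclideanSpace ℝ (Fin 2)) (h : ⟪O - p, a - p⟫ = (0 : ℝ)) :
    dist a p ^ 2 = dist a O ^ 2 - dist O p ^ 2 := by
  have hc : a - O = (a - p) - (O - p) := by abel
  have h' : ⟪a - p, O - p⟫ = (0 : ℝ) := by rw [real_inner_comm]; exact h
  rw [dist_eq_norm, dist_eq_norm, dist_eq_norm, hc,
    norm_sub_sq_real (a - p) (O - p), h']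
  ring

lemma tang_eq (a O p r : EuclideanSpace ℝ (Fin 2)) (hr : dist O p = dist O r)
    (hp : ⟪O - p, a - p⟫ = (0 : ℝ)) (hq : ⟪O - r, a - r⟫ = (0 : ℝ)) :
    dist a p = dist a r := by
  have h1 := tang_sq a O p hp
  have h2 := tang_sq a O r hq
  rw [hr] at h1
  nlinarith [dist_nonneg (x := a) (y := p), dist_nonneg (x := a) (y := r)]

/-- The key identity for the outer length billiard about a 2-gon: `x` and its image `y`
lie on a common ellipse with foci `F₁` and `F₂`. -/
theorem two_gon_confocal_ellipse
    (F₁ F₂ x y O p q : EuclideanSpace ℝ (Fin 2))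
    (hOp : dist O p = dist O F₂) (hOq : dist O q = dist O F₂)
    (hxp : Wbtw ℝ F₁ x p) (hyq : Wbtw ℝ F₁ y q) (hF₂ : Wbtw ℝ x F₂ y)
    (htan : ⟪O - F₂, x - y⟫ = (0 : ℝ))
    (htanp : ⟪O - p, F₁ - p⟫ = (0 : ℝ))
    (htanq : ⟪O - q, F₁ - q⟫ = (0 : ℝ)) :
    dist F₁ x + dist x F₂ = dist F₁ y + dist y F₂ := by
  -- extract parameters
  obtain ⟨s, hs, hxs⟩ := hxp
  obtain ⟨u, hu, hyu⟩ := hyq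
  obtain ⟨t, ht, hFt⟩ := hF₂
  have hxps : x - p = (1 - s) • (F₁ - p) := by
    rw [← hxs]; simp [AffineMap.lineMap_apply]
    module
  have hyqs : y - q = (1 - u) • (F₁ - q) := by
    rw [← hyu]; simp [AffineMap.lineMap_apply]
    module
  have hxF : x - F₂ = t • (x - y) := by
    rw [← hFt]; simp [AffineMap.lineMap_apply]
    module
  have hyF : y - F₂ = (t - 1) • (x - y) := by
    rw [← hFt]; simp [AffineMap.lineMap_apply]
    module
  have hxp' : ⟪O - p, x - p⟫ = (0 : ℝ) := by
    rw [hxps, real_inner_smul_right, htanp, mul_zero]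
  have hyq' : ⟪O - q, y - q⟫ = (0 : ℝ) := by
    rw [hyqs, real_inner_smul_right, htanq, mul_zero]
  have hxF' : ⟪O - F₂, x - F₂⟫ = (0 : ℝ) := by
    rw [hxF, real_inner_smul_right, htan, mul_zero]
  have hyF' : ⟪O - F₂, y - F₂⟫ = (0 : ℝ) := by
    rw [hyF, real_inner_smul_right, htan, mul_zero]
  -- tangent length equalities
  have e1 : dist x p = dist x F₂ := tang_eq x O p F₂ hOp hxp' hxF'
  have e2 : dist y q = dist y F₂ := tang_eq y O q F₂ hOq hyq' hyF'
  have e3 : dist F₁ p = dist F₁ q :=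
    tang_eq F₁ O p q (hOp.trans hOq.symm) htanp htanq
  have d1 : dist F₁ x + dist x p = dist F₁ p := Wbtw.dist_add_dist ⟨s, hs, hxs⟩
  have d2 : dist F₁ y + dist y q = dist F₁ q := Wbtw.dist_add_dist ⟨u, hu, hyu⟩
  rw [← e1, ← e2, d1, d2, e3]
end

section
/- Let r, r′, f, x₁, x₂ be points in the Euclidean plane such that x₁, r′, f, x₂ are collinear in that order (Wbtw ℝ x₁ r′ f and Wbtw ℝ x₁ f x₂), and suppose: (i) dist r′ x₁ + dist r x₁ = dist r′ x₂ + dist r x₂; (ii) 2·dist f r ≤ dist f x₁ + dist r x₁; (iii) 2·dist f r ≤ dist f x₂ + dist r x₂. Let E₁ = {P : dist f P + dist r P = dist f x₁ + dist r x₁} (the ellipse with foci f, r through x₁) and E₂ = {P : dist r′ P + dist r P = dist r′ x₂ + dist r x₂} (the ellipse with foci r′, r through x₂). Then the Hausdorff distance satisfies d_H(E₁, E₂) ≤ 2·dist f r′. -/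
open RealInnerProductSpace

/-- Given two "foci" `A B`, a point `Q ≠ A` and a target sum `s > dist A B`, the ray from `A`
through `Q` meets the ellipse `{R | dist A R + dist B R = s}` in an explicitly computable
point `R`; we record the key quantitative facts about it. -/
private lemma exists_ellipse_pt (A B Q : EuclideanSpace ℝ (Fin 2)) (s : ℝ)
    (hQA : Q ≠ A) (hcs : dist A B < s) :
    ∃ R : EuclideanSpace ℝ (Fin 2),
      dist A R + dist B R = s ∧
      dist Q R = |dist A Q - dist A R| ∧
      (s - dist A B) / 2 ≤ dist A R ∧
      dist A R ≤ (s + dist A B) / 2 ∧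
      dist Q R * (2 * s * dist A Q - (dist A Q) ^ 2 - (dist A B) ^ 2 + (dist B Q) ^ 2)
        = |s - (dist A Q + dist B Q)| * ((s + dist B Q) - dist A Q) * dist A Q := by
  set dA := dist A Q with hdAdef
  set dB := dist B Q with hdBdef
  set c := dist A B with hcdef
  have hdA : 0 < dA := dist_pos.2 (Ne.symm hQA)
  have hc0 : 0 ≤ c := dist_nonneg
  have hs0 : 0 < s := lt_of_le_of_lt hc0 hcs
  set ι := ⟪B - A, Q - A⟫ with hιdef
  have hnBA : ‖B - A‖ = c := (dist_eq_norm' A B).symm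
  have hnQA : ‖Q - A‖ = dA := (dist_eq_norm' A Q).symm
  have hι : |ι| ≤ c * dA := by
    have h := abs_real_inner_le_norm (B - A) (Q - A)
    rwa [hnBA, hnQA] at h
  have hι₁ : ι ≤ c * dA := (abs_le.1 hι).2
  have hι₂ : -(c * dA) ≤ ι := (abs_le.1 hι).1
  have hlaw : dB ^ 2 = c ^ 2 + dA ^ 2 - 2 * ι := by
    have h := norm_sub_sq_real (B - A) (Q - A)
    rw [sub_sub_sub_cancel_right, hnBA, hnQA] at h
    have hnBQ : ‖B - Q‖ = dB := (dist_eq_norm B Q).symm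
    rw [hnBQ] at h
    linarith [h]
  have hDpos : 0 < 2 * (s * dA - ι) := by nlinarith [mul_lt_mul_of_pos_right hcs hdA]
  set ρ := (s ^ 2 - c ^ 2) * dA / (2 * (s * dA - ι)) with hρdef
  have hρD : ρ * (2 * (s * dA - ι)) = (s ^ 2 - c ^ 2) * dA :=
    div_mul_cancel₀ _ (ne_of_gt hDpos)
  have hρ0 : 0 ≤ ρ := div_nonneg (mul_nonneg (by nlinarith) hdA.le) hDpos.le
  have hρs : ρ ≤ s := by
    rw [hρdef, div_le_iff₀ hDpos]
    nlinarith [mul_le_mul_of_nonneg_left hι₁ hs0.le, mul_nonneg (sq_nonneg (s - c)) hdA.le]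
  have hρlb : (s - c) / 2 ≤ ρ := by
    rw [hρdef, le_div_iff₀ hDpos]
    nlinarith [mul_nonneg (sub_nonneg.2 hcs.le) (by nlinarith : (0:ℝ) ≤ c * dA + ι)]
  have hρub : ρ ≤ (s + c) / 2 := by
    rw [hρdef, div_le_iff₀ hDpos]
    nlinarith [mul_nonneg (by linarith : (0:ℝ) ≤ s + c) (by nlinarith : (0:ℝ) ≤ c * dA - ι)]
  clear_value ρ
  have hdA' : dA ≠ 0 := ne_of_gt hdA
  set R := A + (ρ / dA) • (Q - A) with hRdef
  have hAR : dist A R = ρ := by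
    rw [dist_eq_norm', hRdef, add_sub_cancel_left, norm_smul, hnQA, Real.norm_eq_abs,
      abs_of_nonneg (div_nonneg hρ0 hdA.le), div_mul_cancel₀ _ (ne_of_gt hdA)]
  have hQR : dist Q R = |ρ - dA| := by
    have hRQ : R - Q = (ρ / dA - 1) • (Q - A) := by rw [hRdef]; module
    rw [dist_eq_norm', hRQ, norm_smul, hnQA, Real.norm_eq_abs]
    have h1 : |ρ / dA - 1| * dA = |(ρ / dA - 1) * dA| := by
      rw [abs_mul, abs_of_pos hdA]
    rw [h1]
    congr 1
    field_simp
  have hBR : dist B R = s - ρ := by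
    have hsub : R - B = (A - B) + (ρ / dA) • (Q - A) := by rw [hRdef]; abel
    have hinner : ⟪A - B, Q - A⟫ = -ι := by
      rw [hιdef, ← inner_neg_left, neg_sub]
    have hnAB : ‖A - B‖ = c := (dist_eq_norm A B).symm
    have hsq : ‖R - B‖ ^ 2 = (s - ρ) ^ 2 := by
      rw [hsub, norm_add_sq_real, real_inner_smul_right, hinner, norm_smul, Real.norm_eq_abs,
        abs_of_nonneg (div_nonneg hρ0 hdA.le), hnQA, hnAB, div_mul_cancel₀ _ (ne_of_gt hdA)]
      field_simp
      linear_combination hρD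
    have hfac : (‖R - B‖ - (s - ρ)) * (‖R - B‖ + (s - ρ)) = 0 := by linear_combination hsq
    have hnn : 0 ≤ ‖R - B‖ := norm_nonneg _
    have hsρ : 0 ≤ s - ρ := by linarith
    rcases mul_eq_zero.1 hfac with h | h
    · rw [dist_eq_norm']; linarith
    · rw [dist_eq_norm']; linarith
  have hDalt : 2 * s * dA - dA ^ 2 - c ^ 2 + dB ^ 2 = 2 * (s * dA - ι) := by linarith [hlaw]
  have hfac2 : (ρ - dA) * (2 * (s * dA - ι))
      = ((s - (dA + dB)) * ((s + dB) - dA)) * dA := by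
    linear_combination hρD + dA * hlaw
  have htri : dA ≤ c + dB := by
    have := dist_triangle A B Q
    simpa [← hdAdef, ← hcdef, ← hdBdef] using this
  have hge : 0 ≤ (s + dB) - dA := by linarith
  have heq : dist Q R * (2 * s * dA - dA ^ 2 - c ^ 2 + dB ^ 2)
      = |s - (dA + dB)| * ((s + dB) - dA) * dA := by
    rw [hQR, hDalt]
    have h1 : |ρ - dA| * (2 * (s * dA - ι)) = |(ρ - dA) * (2 * (s * dA - ι))| := by
      rw [abs_mul, abs_of_pos hDpos]
    rw [h1, hfac2, abs_mul, abs_mul, abs_of_nonneg hge, abs_of_pos hdA]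
  exact ⟨R, by rw [hAR, hBR]; ring, by rw [hQR, hAR, abs_sub_comm],
    by rw [hAR]; exact hρlb, by rw [hAR]; exact hρub, heq⟩

private lemma inside_aux (A B Q : EuclideanSpace ℝ (Fin 2)) (s : ℝ)
    (h2c : 2 * dist A B ≤ s) (ht : dist A Q + dist B Q ≤ s) (hfar : dist B Q ≤ dist A Q) :
    ∃ R, dist A R + dist B R = s ∧ dist Q R ≤ s - (dist A Q + dist B Q) := by
  by_cases hQA : Q = A
  · have hdAQ : dist A Q = 0 := by rw [hQA, dist_self]
    have hdBQ : dist B Q = 0 := le_antisymm (hdAQ ▸ hfar) dist_nonneg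
    have hBQ : B = Q := by rwa [dist_eq_zero] at hdBQ
    have hs0 : 0 ≤ s := le_trans (by positivity) h2c
    have hd : dist Q (Q + (s / 2) • EuclideanSpace.single (0 : Fin 2) (1 : ℝ)) = s / 2 := by
      rw [dist_eq_norm', add_sub_cancel_left, norm_smul, EuclideanSpace.norm_single]
      simp [Real.norm_eq_abs, abs_of_nonneg hs0]
    refine ⟨Q + (s / 2) • EuclideanSpace.single (0 : Fin 2) (1 : ℝ), ?_, ?_⟩
    · rw [← hQA, hBQ, hd]; ring
    · rw [hd, hdAQ, hdBQ]; linarith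
  · have hdA : 0 < dist A Q := dist_pos.2 fun h => hQA h.symm
    have hs0 : 0 < s := lt_of_lt_of_le (by linarith [dist_nonneg (x := B) (y := Q)]) ht
    have hcs : dist A B < s := by linarith [dist_nonneg (x := A) (y := B)]
    obtain ⟨R, hsum, hQRabs, hlb, hub, heq⟩ := exists_ellipse_pt A B Q s hQA hcs
    set dA := dist A Q
    set dB := dist B Q
    set c := dist A B
    have hc0 : 0 ≤ c := dist_nonneg
    have htri1 : c ≤ dA + dB := by
      have := dist_triangle A Q B
      simpa [dist_comm Q B] using this
    have htri2 : dA ≤ c + dB := dist_triangle A B Q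
    have hdB0 : 0 ≤ dB := dist_nonneg
    have hDpos : 0 < 2 * s * dA - dA ^ 2 - c ^ 2 + dB ^ 2 := by
      nlinarith [mul_pos hdA (sub_pos.2 hcs), sq_nonneg (dA - c - dB)]
    have hkey : ((s + dB) - dA) * dA ≤ 2 * s * dA - dA ^ 2 - c ^ 2 + dB ^ 2 := by
      nlinarith [mul_nonneg (sub_nonneg.2 hfar) (by linarith : (0:ℝ) ≤ s - 2 * dB),
        mul_nonneg (sub_nonneg.2 htri1) hs0.le, mul_nonneg hc0 (by linarith : (0:ℝ) ≤ s - 2 * c)]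
    have habs : |s - (dA + dB)| = s - (dA + dB) := abs_of_nonneg (by linarith)
    rw [habs] at heq
    refine ⟨R, hsum, ?_⟩
    have hle : dist Q R * (2 * s * dA - dA ^ 2 - c ^ 2 + dB ^ 2)
        ≤ (s - (dA + dB)) * (2 * s * dA - dA ^ 2 - c ^ 2 + dB ^ 2) := by
      rw [heq]
      have h0 : 0 ≤ s - (dA + dB) := by linarith
      calc (s - (dA + dB)) * ((s + dB) - dA) * dA
          = (s - (dA + dB)) * (((s + dB) - dA) * dA) := by ring
        _ ≤ (s - (dA + dB)) * (2 * s * dA - dA ^ 2 - c ^ 2 + dB ^ 2) :=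
            mul_le_mul_of_nonneg_left hkey h0
    exact le_of_mul_le_mul_right hle hDpos

private lemma inside_main (A B Q : EuclideanSpace ℝ (Fin 2)) (s : ℝ)
    (h2c : 2 * dist A B ≤ s) (ht : dist A Q + dist B Q ≤ s) :
    ∃ R, dist A R + dist B R = s ∧ dist Q R ≤ s - (dist A Q + dist B Q) := by
  rcases le_total (dist B Q) (dist A Q) with h | h
  · exact inside_aux A B Q s h2c ht h
  · obtain ⟨R, h1, h2⟩ := inside_aux B A Q s (by rwa [dist_comm]) (by linarith) h
    exact ⟨R, by linarith, by linarith⟩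

private lemma outside_aux (A B Q : EuclideanSpace ℝ (Fin 2)) (s η : ℝ)
    (hη : 0 ≤ η) (hc : dist A B ≤ s) (ht₁ : s ≤ dist A Q + dist B Q)
    (ht₂ : dist A Q + dist B Q ≤ s + 2 * η)
    (hkey : dist A B ≤ 2 * η ∨ 2 * (dist A B) ^ 2 ≤ s ^ 2)
    (hnear : dist A Q ≤ dist B Q) :
    ∃ R, dist A R + dist B R = s ∧ dist Q R ≤ 2 * η := by
  have hc0 : 0 ≤ dist A B := dist_nonneg
  by_cases hQA : Q = A
  · have hub2 : dist A Q + dist B Q ≤ s := by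
      rw [hQA, dist_self, zero_add, dist_comm B A]; exact hc
    exact ⟨Q, le_antisymm hub2 ht₁, by simp; linarith⟩
  · by_cases hcs : dist A B < s
    · obtain ⟨R, hsum, hQRabs, hlb, hub, heq⟩ := exists_ellipse_pt A B Q s hQA hcs
      set dA := dist A Q
      set dB := dist B Q
      set c := dist A B
      have hdA : 0 < dA := dist_pos.2 fun h => hQA h.symm
      have htri1 : c ≤ dA + dB := by
        have := dist_triangle A Q B
        simpa [dist_comm Q B] using this
      have htri2 : dB ≤ c + dA := by
        have := dist_triangle B A Q
        simpa [dist_comm B A] using this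
      have htri3 : dA ≤ c + dB := dist_triangle A B Q
      have hs0 : 0 ≤ s := le_trans hc0 hc
      rcases hkey with hksm | hkbig
      · refine ⟨R, hsum, ?_⟩
        rw [hQRabs, abs_sub_le_iff]
        constructor <;> linarith
      · refine ⟨R, hsum, ?_⟩
        have hDpos : 0 < 2 * s * dA - dA ^ 2 - c ^ 2 + dB ^ 2 := by
          nlinarith [mul_pos hdA (sub_pos.2 hcs), sq_nonneg (dA - c - dB)]
        have hkey2 : ((s + dB) - dA) * dA ≤ 2 * s * dA - dA ^ 2 - c ^ 2 + dB ^ 2 := by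
          nlinarith [mul_nonneg (sub_nonneg.2 hnear) (by linarith : (0:ℝ) ≤ 2 * dB - s),
            mul_le_mul_of_nonneg_right ht₁ hs0]
        have habs : |s - (dA + dB)| = (dA + dB) - s := by
          rw [abs_of_nonpos (by linarith)]; ring
        rw [habs] at heq
        have hge : 0 ≤ (s + dB) - dA := by linarith
        have e2 : ((dA + dB) - s) * (((s + dB) - dA) * dA) ≤ (2 * η) *
            (2 * s * dA - dA ^ 2 - c ^ 2 + dB ^ 2) := by
          apply mul_le_mul (by linarith) hkey2 (mul_nonneg hge hdA.le) (by linarith)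
        have e1 : dist Q R * (2 * s * dA - dA ^ 2 - c ^ 2 + dB ^ 2)
            ≤ (2 * η) * (2 * s * dA - dA ^ 2 - c ^ 2 + dB ^ 2) := by
          rw [heq]; calc ((dA + dB) - s) * ((s + dB) - dA) * dA
              = ((dA + dB) - s) * (((s + dB) - dA) * dA) := by ring
            _ ≤ _ := e2
        exact le_of_mul_le_mul_right e1 hDpos
    · have hceq : dist A B = s := le_antisymm hc (not_lt.1 hcs)
      refine ⟨A, by simp [dist_comm B A, hceq], ?_⟩
      have hdAle : 2 * dist A Q ≤ s + 2 * η := by linarith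
      rw [dist_comm]
      rcases hkey with h | h
      · linarith [hceq]
      · have hs00 : s = 0 := by nlinarith [hceq, sq_nonneg s]
        have : dist A Q + dist B Q ≤ 2 * η := by linarith
        linarith [dist_nonneg (x := B) (y := Q)]

private lemma outside_main (A B Q : EuclideanSpace ℝ (Fin 2)) (s η : ℝ)
    (hη : 0 ≤ η) (hc : dist A B ≤ s) (ht₁ : s ≤ dist A Q + dist B Q)
    (ht₂ : dist A Q + dist B Q ≤ s + 2 * η)
    (hkey : dist A B ≤ 2 * η ∨ 2 * (dist A B) ^ 2 ≤ s ^ 2) :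
    ∃ R, dist A R + dist B R = s ∧ dist Q R ≤ 2 * η := by
  rcases le_total (dist A Q) (dist B Q) with h | h
  · exact outside_aux A B Q s η hη hc ht₁ ht₂ hkey h
  · obtain ⟨R, h1, h2⟩ := outside_aux B A Q s η hη (by rwa [dist_comm]) (by linarith)
      (by linarith) (by rwa [dist_comm]) h
    exact ⟨R, by linarith, h2⟩

/-- The jump estimate at an unsteady point: the consecutive steady-phase ellipses are at
Hausdorff distance at most twice the focal shift `dist f r′`. -/
theorem hausdorffDist_jump_le
    (r r' f x₁ x₂ : EuclideanSpace ℝ (Fin 2))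
    (h₁ : Wbtw ℝ x₁ r' f) (h₂ : Wbtw ℝ x₁ f x₂)
    (hconf : dist r' x₁ + dist r x₁ = dist r' x₂ + dist r x₂)
    (hecc₁ : 2 * dist f r ≤ dist f x₁ + dist r x₁)
    (hecc₂ : 2 * dist f r ≤ dist f x₂ + dist r x₂) :
    Metric.hausdorffDist
        {P : EuclideanSpace ℝ (Fin 2) | dist f P + dist r P = dist f x₁ + dist r x₁}
        {P : EuclideanSpace ℝ (Fin 2) | dist r' P + dist r P = dist r' x₂ + dist r x₂}
      ≤ 2 * dist f r' := by
  have hδ0 : 0 ≤ dist f r' := dist_nonneg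
  have hA1 : dist x₁ r' + dist r' f = dist x₁ f := h₁.dist_add_dist
  have hA2 : dist x₁ f + dist f x₂ = dist x₁ x₂ := h₂.dist_add_dist
  have hA3 : dist r' f + dist f x₂ = dist r' x₂ := by
    have t1 : dist x₁ x₂ ≤ dist x₁ r' + dist r' x₂ := dist_triangle _ _ _
    have t2 : dist r' x₂ ≤ dist r' f + dist f x₂ := dist_triangle _ _ _
    linarith
  have hs₁σ : dist f x₁ + dist r x₁ = (dist r' x₂ + dist r x₂) + dist f r' := by
    have h : dist r' x₁ = dist f x₁ - dist f r' := by
      rw [dist_comm r' x₁, dist_comm f x₁, dist_comm f r']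
      linarith
    linarith [hconf, h]
  have hσδ : dist f r' + 2 * dist f r ≤ dist r' x₂ + dist r x₂ := by
    have h : dist r' x₂ = dist f r' + dist f x₂ := by
      rw [dist_comm f r']; linarith
    linarith
  apply Metric.hausdorffDist_le_of_mem_dist (by positivity)
  · -- from E₁ into E₂
    intro P hP
    simp only [Set.mem_setOf_eq] at hP
    have htr1 : dist f P ≤ dist f r' + dist r' P := dist_triangle _ _ _
    have htr2 : dist r' P ≤ dist f r' + dist f P := by
      have := dist_triangle r' f P
      rw [dist_comm r' f] at this
      linarith
    have hcσ : dist r' r ≤ dist r' x₂ + dist r x₂ := by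
      have := dist_triangle r' x₂ r
      rw [dist_comm x₂ r] at this
      linarith
    have ht₁ : dist r' x₂ + dist r x₂ ≤ dist r' P + dist r P := by linarith
    have ht₂ : dist r' P + dist r P ≤ (dist r' x₂ + dist r x₂) + 2 * dist f r' := by linarith
    have hkey : dist r' r ≤ 2 * dist f r' ∨
        2 * (dist r' r) ^ 2 ≤ (dist r' x₂ + dist r x₂) ^ 2 := by
      by_cases h : dist r' r ≤ 2 * dist f r'
      · exact Or.inl h
      · refine Or.inr ?_
        have hc12 : dist r' r ≤ dist f r' + dist f r := by
          have := dist_triangle r' f r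
          rw [dist_comm r' f] at this
          linarith
        push_neg at h
        nlinarith [dist_nonneg (x := r') (y := r), dist_nonneg (x := f) (y := r'),
          dist_nonneg (x := f) (y := r)]
    obtain ⟨R, hR1, hR2⟩ := outside_main r' r P (dist r' x₂ + dist r x₂) (dist f r')
      hδ0 hcσ ht₁ ht₂ hkey
    exact ⟨R, hR1, hR2⟩
  · -- from E₂ into E₁
    intro Q hQ
    simp only [Set.mem_setOf_eq] at hQ
    have htr1 : dist f Q ≤ dist f r' + dist r' Q := dist_triangle _ _ _
    have htr2 : dist r' Q ≤ dist f r' + dist f Q := by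
      have := dist_triangle r' f Q
      rw [dist_comm r' f] at this
      linarith
    have ht : dist f Q + dist r Q ≤ dist f x₁ + dist r x₁ := by linarith
    obtain ⟨R, hR1, hR2⟩ := inside_main f r Q (dist f x₁ + dist r x₁) hecc₁ ht
    refine ⟨R, hR1, ?_⟩
    have : (dist f x₁ + dist r x₁) - (dist f Q + dist r Q) ≤ 2 * dist f r' := by linarith
    linarith
end

section
/- Let F₁, F₂ be points in the Euclidean plane and set f = dist F₁ F₂ / 2. Let a₁, a₂ be real numbers with f < a₁ ≤ a₂, and let E₁ = {P : dist P F₁ + dist P F₂ = 2a₁} and E₂ = {P : dist P F₁ + dist P F₂ = 2a₂}. Then the Hausdorff distance between E₁ and E₂ is at most the difference of the semi-minor axes: d_H(E₁, E₂) ≤ √(a₂² − f²) − √(a₁² − f²). -/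
/-!
Put the foci at `c ∓ f • u` with `‖u‖ = 1` and write points as `c + (a * p) • u + b • v` with
`v ⊥ u`, where `a² = b² + f²`. Since `(a p ± f)² + b² ‖v‖² = (a ± f p)² + b² (p² + ‖v‖² - 1)`,
such a point lies on the ellipse of semi-axes `a, b` exactly when `p² + ‖v‖² = 1`. Keeping
`(p, v)` and passing to the confocal semi-axes `a', b'` moves the point by
`((a - a') * p) • u + (b - b') • v`, of norm at most `|b' - b|`, because the semi-minor axes
differ by at least as much as the semi-major ones.
-/

open Real RealInnerProductSpace Metric

def ellipse {E : Type*} [PseudoMetricSpace E] (F₁ F₂ : E) (a : ℝ) : Set E :=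
  {P | dist P F₁ + dist P F₂ = 2 * a}

theorem sqrt_add_sqrt_eq_two_mul_iff {a b f p y : ℝ} (ha : 0 < a) (hb : 0 < b)
    (hab : a ^ 2 = b ^ 2 + f ^ 2) :
    √((a * p + f) ^ 2 + (b * y) ^ 2) + √((a * p - f) ^ 2 + (b * y) ^ 2) = 2 * a ↔
      p ^ 2 + y ^ 2 = 1 := by
  have e₁ : (a * p + f) ^ 2 + (b * y) ^ 2 = (a + f * p) ^ 2 + b ^ 2 * (p ^ 2 + y ^ 2 - 1) := by
    linear_combination (p ^ 2 - 1) * hab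
  have e₂ : (a * p - f) ^ 2 + (b * y) ^ 2 = (a - f * p) ^ 2 + b ^ 2 * (p ^ 2 + y ^ 2 - 1) := by
    linear_combination (p ^ 2 - 1) * hab
  constructor
  · intro h
    set r₁ := √((a * p + f) ^ 2 + (b * y) ^ 2)
    set r₂ := √((a * p - f) ^ 2 + (b * y) ^ 2)
    have hr₁ : r₁ ^ 2 = (a * p + f) ^ 2 + (b * y) ^ 2 := sq_sqrt (by positivity)
    have hr₂ : r₂ ^ 2 = (a * p - f) ^ 2 + (b * y) ^ 2 := sq_sqrt (by positivity)
    have hr : r₁ = a + f * p := by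
      have : a * (r₁ - r₂) = a * (2 * f * p) := by
        linear_combination -(r₁ - r₂) / 2 * h + (hr₁ - hr₂) / 2
      linarith [mul_left_cancel₀ ha.ne' this]
    have hb0 : b ^ 2 * (p ^ 2 + y ^ 2 - 1) = 0 := by
      rw [hr] at hr₁; linear_combination -e₁ - hr₁
    linarith [(mul_eq_zero.1 hb0).resolve_left (by positivity)]
  · intro h
    have hp : |f * p| ≤ a := by
      have : |p| ≤ 1 := abs_le_one_iff_mul_self_le_one.2 (by nlinarith)
      have : |f| ≤ a := abs_le_of_sq_le_sq (by nlinarith) ha.le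
      rw [abs_mul]
      nlinarith [abs_nonneg f, abs_nonneg p]
    rw [e₁, e₂, h, sub_self, mul_zero, add_zero, add_zero, sqrt_sq_eq_abs, sqrt_sq_eq_abs,
      abs_of_nonneg (by linarith [neg_abs_le (f * p)]),
      abs_of_nonneg (by linarith [le_abs_self (f * p)])]
    ring

theorem abs_sub_le_abs_sub_of_sq_eq_sq_add_sq {a a' b b' f : ℝ} (ha : 0 ≤ a) (ha' : 0 ≤ a')
    (hab : a ^ 2 = b ^ 2 + f ^ 2) (hab' : a' ^ 2 = b' ^ 2 + f ^ 2) :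
    |a' - a| ≤ |b' - b| := by
  -- Cauchy–Schwarz for `(b, f)` and `(b', f)`, whose norms are `a` and `a'`
  have hcs : b * b' + f ^ 2 ≤ a * a' := by
    refine abs_le_of_sq_le_sq' ?_ (by positivity) |>.2
    nlinarith [sq_nonneg (f * (b - b'))]
  rw [← sq_le_sq]
  nlinarith

theorem sq_eq_sqrt_sq_sub_sq_add_sq {a f : ℝ} (h : f ^ 2 ≤ a ^ 2) :
    a ^ 2 = √(a ^ 2 - f ^ 2) ^ 2 + f ^ 2 := by
  rw [sq_sqrt (sub_nonneg.2 h)]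
  ring

section

variable {E : Type*} [NormedAddCommGroup E] [InnerProductSpace ℝ E]

theorem norm_smul_add_smul_of_inner_eq_zero {u v : E} (hu : ‖u‖ = 1) (huv : ⟪u, v⟫ = 0)
    (s t : ℝ) : ‖s • u + t • v‖ = √(s ^ 2 + (t * ‖v‖) ^ 2) := by
  rw [← sqrt_sq (norm_nonneg _), norm_add_sq_real, inner_smul_left, inner_smul_right, huv,
    norm_smul, norm_smul, hu, norm_eq_abs, norm_eq_abs, mul_pow, mul_pow, sq_abs, sq_abs]
  congr 1
  ring

theorem add_smul_add_smul_mem_ellipse_iff (c : E) {u v : E} (hu : ‖u‖ = 1) (huv : ⟪u, v⟫ = 0)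
    {a b f : ℝ} (ha : 0 < a) (hb : 0 < b) (hab : a ^ 2 = b ^ 2 + f ^ 2) (p : ℝ) :
    c + (a * p) • u + b • v ∈ ellipse (c - f • u) (c + f • u) a ↔ p ^ 2 + ‖v‖ ^ 2 = 1 := by
  have h₁ : c + (a * p) • u + b • v - (c - f • u) = (a * p + f) • u + b • v := by module
  have h₂ : c + (a * p) • u + b • v - (c + f • u) = (a * p - f) • u + b • v := by module
  rw [ellipse, Set.mem_ofPred_eq, dist_eq_norm, dist_eq_norm, h₁, h₂,
    norm_smul_add_smul_of_inner_eq_zero hu huv, norm_smul_add_smul_of_inner_eq_zero hu huv,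
    sqrt_add_sqrt_eq_two_mul_iff ha hb hab]

theorem exists_eq_add_smul_add_smul_of_inner_eq_zero {u : E} (hu : ‖u‖ = 1) {a b : ℝ}
    (ha : a ≠ 0) (hb : b ≠ 0) (c P : E) :
    ∃ (p : ℝ) (v : E), ⟪u, v⟫ = 0 ∧ P = c + (a * p) • u + b • v := by
  refine ⟨⟪u, P - c⟫ / a, b⁻¹ • (P - c - ⟪u, P - c⟫ • u), ?_, ?_⟩
  · rw [inner_smul_right, inner_sub_right, inner_smul_right, real_inner_self_eq_norm_sq, hu]
    ring
  · rw [mul_div_cancel₀ _ ha, smul_smul, mul_inv_cancel₀ hb, one_smul]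
    abel

theorem exists_mem_ellipse_dist_le {c u P : E} (hu : ‖u‖ = 1) {a a' b b' f : ℝ} (ha : 0 < a)
    (ha' : 0 < a') (hb : 0 < b) (hb' : 0 < b') (hab : a ^ 2 = b ^ 2 + f ^ 2)
    (hab' : a' ^ 2 = b' ^ 2 + f ^ 2) (hP : P ∈ ellipse (c - f • u) (c + f • u) a) :
    ∃ Q ∈ ellipse (c - f • u) (c + f • u) a', dist P Q ≤ |b' - b| := by
  obtain ⟨p, v, huv, rfl⟩ := exists_eq_add_smul_add_smul_of_inner_eq_zero hu ha.ne' hb.ne' c P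
  rw [add_smul_add_smul_mem_ellipse_iff c hu huv ha hb hab] at hP
  refine ⟨c + (a' * p) • u + b' • v,
    (add_smul_add_smul_mem_ellipse_iff c hu huv ha' hb' hab' p).2 hP, ?_⟩
  have hPQ : c + (a * p) • u + b • v - (c + (a' * p) • u + b' • v)
      = ((a - a') * p) • u + (b - b') • v := by module
  have hsq := sq_le_sq.2 (abs_sub_le_abs_sub_of_sq_eq_sq_add_sq ha.le ha'.le hab hab')
  rw [dist_eq_norm, hPQ, norm_smul_add_smul_of_inner_eq_zero hu huv, ← sqrt_sq_eq_abs]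
  gcongr
  nlinarith [mul_le_mul_of_nonneg_right hsq (sq_nonneg p)]

theorem hausdorffDist_ellipse_le {c u : E} (hu : ‖u‖ = 1) {a a' b b' f : ℝ} (ha : 0 < a)
    (ha' : 0 < a') (hb : 0 < b) (hb' : 0 < b') (hab : a ^ 2 = b ^ 2 + f ^ 2)
    (hab' : a' ^ 2 = b' ^ 2 + f ^ 2) :
    hausdorffDist (ellipse (c - f • u) (c + f • u) a) (ellipse (c - f • u) (c + f • u) a')
      ≤ |b' - b| :=
  hausdorffDist_le_of_mem_dist (abs_nonneg _)
    (fun _ hP ↦ exists_mem_ellipse_dist_le hu ha ha' hb hb' hab hab' hP)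
    (fun _ hP ↦ by
      simpa only [abs_sub_comm] using exists_mem_ellipse_dist_le hu ha' ha hb' hb hab' hab hP)

theorem exists_eq_sub_smul_and_eq_add_smul [Nontrivial E] (F₁ F₂ : E) :
    ∃ c u : E, ‖u‖ = 1 ∧ F₁ = c - (dist F₁ F₂ / 2) • u ∧ F₂ = c + (dist F₁ F₂ / 2) • u := by
  suffices ∃ u : E, ‖u‖ = 1 ∧ F₂ - F₁ = dist F₁ F₂ • u by
    obtain ⟨u, hu, h⟩ := this
    refine ⟨F₁ + (dist F₁ F₂ / 2) • u, u, hu, by abel, ?_⟩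
    rw [add_assoc, ← add_smul, add_halves, ← h]
    abel
  rcases eq_or_ne F₁ F₂ with rfl | hne
  · simpa using exists_norm_eq E zero_le_one
  · have hne' : F₂ - F₁ ≠ 0 := sub_ne_zero.2 hne.symm
    refine ⟨‖F₂ - F₁‖⁻¹ • (F₂ - F₁), norm_smul_inv_norm hne', ?_⟩
    rw [smul_smul, dist_comm, dist_eq_norm, mul_inv_cancel₀ (norm_ne_zero_iff.2 hne'), one_smul]

end

/-- The Hausdorff distance between two confocal ellipses is at most the difference of
their semi-minor axes. -/
theorem hausdorffDist_confocal_le_semi_minor_diff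
    (F₁ F₂ : EuclideanSpace ℝ (Fin 2)) (f a₁ a₂ : ℝ)
    (hf : f = dist F₁ F₂ / 2) (h₁ : f < a₁) (h₁₂ : a₁ ≤ a₂) :
    Metric.hausdorffDist
        {P : EuclideanSpace ℝ (Fin 2) | dist P F₁ + dist P F₂ = 2 * a₁}
        {P : EuclideanSpace ℝ (Fin 2) | dist P F₁ + dist P F₂ = 2 * a₂}
      ≤ Real.sqrt (a₂ ^ 2 - f ^ 2) - Real.sqrt (a₁ ^ 2 - f ^ 2) := by
  have hf₀ : 0 ≤ f := hf ▸ by positivity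
  have h₂ : f < a₂ := h₁.trans_le h₁₂
  obtain ⟨c, u, hu, hF₁, hF₂⟩ := exists_eq_sub_smul_and_eq_add_smul F₁ F₂
  rw [← hf] at hF₁ hF₂
  change hausdorffDist (ellipse F₁ F₂ a₁) (ellipse F₁ F₂ a₂) ≤ _
  rw [hF₁, hF₂]
  have hb : √(a₁ ^ 2 - f ^ 2) ≤ √(a₂ ^ 2 - f ^ 2) := sqrt_le_sqrt (by nlinarith)
  calc _ ≤ |√(a₂ ^ 2 - f ^ 2) - √(a₁ ^ 2 - f ^ 2)| :=
        hausdorffDist_ellipse_le hu (by linarith) (by linarith) (sqrt_pos.2 (by nlinarith))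
          (sqrt_pos.2 (by nlinarith)) (sq_eq_sqrt_sq_sub_sq_add_sq (by nlinarith))
          (sq_eq_sqrt_sq_sub_sq_add_sq (by nlinarith))
    _ = _ := abs_of_nonneg (sub_nonneg.2 hb)
end
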